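/- arXiv:2108.05729 — 2 statements merged into one kernel-verified Lean document; each statement's English description precedes it below -/
import Mathlib

section
/- Let θ be an inner function such that θH²(𝔻) is invariant under C_φ for every holomorphic self-map φ of 𝔻. Then θ is a unimodular constant. -/
/-!
Take for `φ` the constant map at a point `w` with `θ w ≠ 0` (there is one, since `|θ|` has radial
limits `1` almost everywhere). Invariance of `θH²` applied to `1` gives `θ w = θ * g` with
`g ∈ H²`, so `θ` has no zeros and `1/θ ∈ H²`. The mean value property of `1/θ` gives
`2π/|θ 0| ≤ ∫ |θ(r e^{it})|⁻¹ dt`, and these integrals tend to `2π` as `r → 1`: the integrands tend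
to `1` almost everywhere and are bounded in `L²`, hence uniformly integrable. Thus `|θ 0| ≥ 1`,
and by the maximum modulus principle `θ` is the constant `θ 0`.
-/

open Complex Metric Filter Set

noncomputable section

/-- A holomorphic self-map of the open unit disc. -/
def SelfMapD (φ : ℂ → ℂ) : Prop :=
  DifferentiableOn ℂ φ (Metric.ball (0:ℂ) 1) ∧
  Set.MapsTo φ (Metric.ball (0:ℂ) 1) (Metric.ball (0:ℂ) 1)

/-- Membership in the Hardy space `H²(𝔻)`. -/
def MemHardy2 (f : ℂ → ℂ) : Prop :=
  DifferentiableOn ℂ f (Metric.ball (0:ℂ) 1) ∧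
  ∃ M : ℝ, ∀ r : ℝ, 0 ≤ r → r < 1 →
    (∫ t in (0:ℝ)..(2 * Real.pi),
      ‖f ((r : ℂ) * Complex.exp (t * Complex.I))‖ ^ 2) ≤ M

/-- An inner function: a bounded-by-one holomorphic function on `𝔻` whose radial
boundary values have modulus one almost everywhere. -/
def InnerFunction (θ : ℂ → ℂ) : Prop :=
  DifferentiableOn ℂ θ (Metric.ball (0:ℂ) 1) ∧
  (∀ z ∈ Metric.ball (0:ℂ) 1, ‖θ z‖ ≤ 1) ∧
  ∀ᵐ t : ℝ, Filter.Tendsto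
    (fun r : ℝ => ‖θ ((r : ℂ) * Complex.exp (t * Complex.I))‖)
    (nhdsWithin 1 (Set.Iio 1)) (nhds 1)

/-- The `n`-th Taylor coefficient of `f` at the origin. -/
def hcoef (f : ℂ → ℂ) (n : ℕ) : ℂ := iteratedDeriv n f 0 / n.factorial

/-- The `H²` inner product, via Taylor coefficients. -/
def hInner (f g : ℂ → ℂ) : ℂ := ∑' n : ℕ, hcoef f n * (starRingEnd ℂ) (hcoef g n)

/-- The square of the `H²` norm. -/
def hNorm2 (f : ℂ → ℂ) : ℝ := ∑' n : ℕ, ‖hcoef f n‖ ^ 2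

/-- Membership in the model space `Q_θ = H² ⊖ θH²`. -/
def MemModel (θ f : ℂ → ℂ) : Prop :=
  MemHardy2 f ∧ ∀ g, MemHardy2 g → hInner f (fun z => θ z * g z) = 0

/-- The model space `Q_θ` is invariant under the composition operator `C_φ`. -/
def ModelInv (θ φ : ℂ → ℂ) : Prop :=
  ∀ f, MemModel θ f → MemModel θ (fun z => f (φ z))

/-- The Beurling subspace `θH²` is invariant under the composition operator `C_φ`. -/
def BeurlingInv (θ φ : ℂ → ℂ) : Prop :=
  ∀ f, MemHardy2 f → ∃ g, MemHardy2 g ∧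
    ∀ z ∈ Metric.ball (0:ℂ) 1, θ (φ z) * f (φ z) = θ z * g z

/-- A subspace of functions is invariant under `C_φ` (as functions on the disc). -/
def SpanInvOn (Q : Submodule ℂ (ℂ → ℂ)) (φ : ℂ → ℂ) : Prop :=
  ∀ f ∈ Q, ∃ g ∈ Q, ∀ z ∈ Metric.ball (0:ℂ) 1, f (φ z) = g z

/-- The (holomorphic extension of the) quotient `(θ∘σ)/θ` lies in `H²`. -/
def QuotInH2 (θ σ : ℂ → ℂ) : Prop :=
  ∃ g, MemHardy2 g ∧ ∀ z ∈ Metric.ball (0:ℂ) 1, θ z ≠ 0 → g z = θ (σ z) / θ z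

/-- The model space spanned by `z^t/(1-ᾱz)^{t+1}`, `0 ≤ t ≤ n-1`. -/
def Qball (α : ℂ) (n : ℕ) : Submodule ℂ (ℂ → ℂ) :=
  Submodule.span ℂ
    {f : ℂ → ℂ | ∃ t : ℕ, t < n ∧ f = fun z => z ^ t / (1 - (starRingEnd ℂ) α * z) ^ (t + 1)}

open MeasureTheory Topology

section UniformIntegrability

variable {α ι : Type*} [MeasurableSpace α] {μ : Measure α} {l : Filter ι} {f : ι → α → ℝ}
  {c C : ℝ}

lemma le_min_add_sq_div {x K : ℝ} (hx : 0 ≤ x) (hK : 0 < K) : x ≤ min x K + x ^ 2 / K := by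
  rcases le_total x K with hxK | hKx
  · rw [min_eq_left hxK]
    linarith [show 0 ≤ x ^ 2 / K by positivity]
  · rw [min_eq_right hKx]
    have : K * x ≤ x ^ 2 := by nlinarith
    have : x ≤ x ^ 2 / K := by rw [le_div_iff₀ hK]; linarith
    linarith

lemma tendsto_integral_min_of_tendsto_ae [IsFiniteMeasure μ] [l.IsCountablyGenerated]
    (hf_meas : ∀ᶠ i in l, AEStronglyMeasurable (f i) μ) (hf_nonneg : ∀ᶠ i in l, 0 ≤ᵐ[μ] f i)
    (hlim : ∀ᵐ x ∂μ, Tendsto (fun i => f i x) l (𝓝 c)) (K : ℝ) :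
    Tendsto (fun i => ∫ x, min (f i x) K ∂μ) l (𝓝 (μ.real univ * min c K)) := by
  have := tendsto_integral_filter_of_dominated_convergence (μ := μ) (l := l)
    (F := fun i x => min (f i x) K) (f := fun _ => min c K) (fun _ => |K|) ?_ ?_ ?_ ?_
  · simpa using this
  · filter_upwards [hf_meas] with i hi using hi.inf aestronglyMeasurable_const
  · filter_upwards [hf_nonneg] with i hi
    filter_upwards [hi] with x (hx : 0 ≤ f i x)
    rw [Real.norm_eq_abs, abs_le]
    exact ⟨le_min (by linarith [abs_nonneg K]) (neg_abs_le K),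
      (min_le_right _ _).trans (le_abs_self K)⟩
  · exact integrable_const _
  · filter_upwards [hlim] with x hx using hx.min tendsto_const_nhds

lemma tendsto_integral_of_tendsto_ae_of_integral_sq_le [IsFiniteMeasure μ]
    [l.IsCountablyGenerated] (hf_int : ∀ᶠ i in l, Integrable (f i) μ)
    (hf_sq_int : ∀ᶠ i in l, Integrable (fun x => f i x ^ 2) μ)
    (hf_nonneg : ∀ᶠ i in l, 0 ≤ᵐ[μ] f i) (hf_sq : ∀ᶠ i in l, ∫ x, f i x ^ 2 ∂μ ≤ C)
    (hlim : ∀ᵐ x ∂μ, Tendsto (fun i => f i x) l (𝓝 c)) :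
    Tendsto (fun i => ∫ x, f i x ∂μ) l (𝓝 (μ.real univ * c)) := by
  have hmin_int (K : ℝ) : ∀ᶠ i in l, Integrable (fun x => min (f i x) K) μ := by
    filter_upwards [hf_int] with i hi using hi.inf (integrable_const K)
  have hmin_tendsto (K : ℝ) := tendsto_integral_min_of_tendsto_ae
    (hf_int.mono fun i hi => hi.aestronglyMeasurable) hf_nonneg hlim K
  have hmin_le (K : ℝ) : ∀ᶠ i in l, ∫ x, min (f i x) K ∂μ ≤ ∫ x, f i x ∂μ := by
    filter_upwards [hmin_int K, hf_int] with i hmin hi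
      using integral_mono hmin hi fun x => min_le_left _ _
  have le_min_add {K : ℝ} (hK : 0 < K) :
      ∀ᶠ i in l, ∫ x, f i x ∂μ ≤ ∫ x, min (f i x) K ∂μ + C / K := by
    filter_upwards [hmin_int K, hf_int, hf_sq_int, hf_nonneg, hf_sq]
      with i hmin hi hsq hnonneg hC
    calc ∫ x, f i x ∂μ ≤ ∫ x, (min (f i x) K + f i x ^ 2 / K) ∂μ := by
          refine integral_mono_ae hi (hmin.add (hsq.div_const K)) ?_
          filter_upwards [hnonneg] with x hx using le_min_add_sq_div hx hK
      _ = ∫ x, min (f i x) K ∂μ + (∫ x, f i x ^ 2 ∂μ) / K := by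
          rw [integral_add hmin (hsq.div_const K), integral_div]
      _ ≤ ∫ x, min (f i x) K ∂μ + C / K := by gcongr
  rw [tendsto_order]
  constructor
  · intro a ha
    have hc := (hmin_tendsto c).eventually_const_lt (by rwa [min_self])
    filter_upwards [hc, hmin_le c] with i h₁ h₂ using h₁.trans_le h₂
  · intro b hb
    obtain ⟨δ, hδ, hbδ⟩ : ∃ δ > 0, b = μ.real univ * c + 2 * δ :=
      ⟨(b - μ.real univ * c) / 2, by linarith, by ring⟩
    set K := max (max c 1) (C / δ + 1)
    have hcK : c ≤ K := (le_max_left _ _).trans (le_max_left _ _)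
    have hK : 0 < K := zero_lt_one.trans_le ((le_max_right _ _).trans (le_max_left _ _))
    have hCK : C / K < δ := by
      rw [div_lt_iff₀ hK, ← div_lt_iff₀' hδ]
      exact (lt_add_one _).trans_le (le_max_right _ _)
    have hT := (hmin_tendsto K).eventually_lt_const
      (show μ.real univ * min c K < μ.real univ * c + δ by rw [min_eq_left hcK]; linarith)
    filter_upwards [hT, le_min_add hK] with i h₁ h₂
    linarith

end UniformIntegrability

lemma ofReal_mul_exp_mem_ball {r : ℝ} (hr₀ : 0 ≤ r) (hr₁ : r < 1) (t : ℝ) :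
    (r : ℂ) * Complex.exp (t * I) ∈ ball (0 : ℂ) 1 := by
  simpa [norm_exp_ofReal_mul_I, abs_of_nonneg hr₀] using hr₁

lemma ContinuousOn.continuous_ofReal_mul_exp {E : Type*} [TopologicalSpace E] {F : ℂ → E}
    (hF : ContinuousOn F (ball 0 1)) {r : ℝ} (hr₀ : 0 ≤ r) (hr₁ : r < 1) :
    Continuous fun t : ℝ => F (r * Complex.exp (t * I)) :=
  hF.comp_continuous (by fun_prop) (ofReal_mul_exp_mem_ball hr₀ hr₁)

lemma DifferentiableOn.two_pi_mul_norm_apply_zero_le {F : ℂ → ℂ}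
    (hF : DifferentiableOn ℂ F (ball 0 1)) {r : ℝ} (hr₀ : 0 ≤ r) (hr₁ : r < 1) :
    2 * Real.pi * ‖F 0‖ ≤ ∫ t in (0 : ℝ)..2 * Real.pi, ‖F (r * Complex.exp (t * I))‖ := by
  have hmean : Real.circleAverage F 0 r = F 0 := by
    refine DiffContOnCl.circleAverage (hF.mono ?_).diffContOnCl
    exact closure_ball_subset_closedBall.trans
      (closedBall_subset_ball (by rwa [abs_of_nonneg hr₀]))
  rw [← hmean, Real.circleAverage_def, norm_smul, norm_inv, Real.norm_of_nonneg (by positivity),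
    mul_inv_cancel_left₀ (by positivity)]
  simpa [circleMap_zero] using
    intervalIntegral.norm_integral_le_integral_norm (f := fun t => F (circleMap 0 r t))
      (by positivity : 0 ≤ 2 * Real.pi)

lemma memHardy2_const (c : ℂ) : MemHardy2 fun _ => c :=
  ⟨differentiableOn_const c, 2 * Real.pi * ‖c‖ ^ 2, fun _ _ _ => by simp⟩

lemma MemHardy2.const_mul {f : ℂ → ℂ} (hf : MemHardy2 f) (c : ℂ) :
    MemHardy2 fun z => c * f z := by
  obtain ⟨hfd, M, hM⟩ := hf
  refine ⟨(differentiableOn_const c).mul hfd, ‖c‖ ^ 2 * M, fun r hr₀ hr₁ => ?_⟩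
  simp only [norm_mul, mul_pow, intervalIntegral.integral_const_mul]
  exact mul_le_mul_of_nonneg_left (hM r hr₀ hr₁) (by positivity)

lemma MemHardy2.congr {f g : ℂ → ℂ} (hf : MemHardy2 f) (hfg : EqOn f g (ball 0 1)) :
    MemHardy2 g := by
  obtain ⟨hfd, M, hM⟩ := hf
  refine ⟨hfd.congr hfg.symm, M, fun r hr₀ hr₁ => ?_⟩
  calc _ = ∫ t in (0 : ℝ)..2 * Real.pi, ‖f (r * Complex.exp (t * I))‖ ^ 2 :=
        intervalIntegral.integral_congr fun t _ => by
          rw [hfg (ofReal_mul_exp_mem_ball hr₀ hr₁ t)]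
    _ ≤ M := hM r hr₀ hr₁

lemma selfMapD_const {w : ℂ} (hw : w ∈ ball (0 : ℂ) 1) : SelfMapD fun _ => w :=
  ⟨differentiableOn_const w, fun _ _ => hw⟩

namespace InnerFunction

variable {θ : ℂ → ℂ}

lemma exists_ne_zero (hθ : InnerFunction θ) : ∃ w ∈ ball (0 : ℂ) 1, θ w ≠ 0 := by
  by_contra! hzero
  obtain ⟨t, ht⟩ := hθ.2.2.exists
  have hvanish : ∀ᶠ r : ℝ in 𝓝[<] 1, ‖θ (r * Complex.exp (t * I))‖ = 0 := by
    filter_upwards [Ioo_mem_nhdsLT one_pos] with r hr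
    rw [hzero _ (ofReal_mul_exp_mem_ball hr.1.le hr.2 t), norm_zero]
  exact one_ne_zero (tendsto_nhds_unique ht (tendsto_const_nhds.congr' (hvanish.mono
    fun _ h => h.symm)))

lemma tendsto_integral_inv_norm (hθ : InnerFunction θ) (hinv : MemHardy2 fun z => (θ z)⁻¹) :
    Tendsto (fun r : ℝ => ∫ t in (0 : ℝ)..2 * Real.pi, ‖θ (r * Complex.exp (t * I))‖⁻¹)
      (𝓝[<] 1) (𝓝 (2 * Real.pi)) := by
  obtain ⟨hinvd, M, hM⟩ := hinv
  have hr : ∀ᶠ r : ℝ in 𝓝[<] 1, r ∈ Ioo 0 1 := Ioo_mem_nhdsLT one_pos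
  have hcont : ∀ᶠ r : ℝ in 𝓝[<] 1,
      Continuous fun t : ℝ => ‖θ (r * Complex.exp (t * I))‖⁻¹ := by
    filter_upwards [hr] with r hr
    simpa only [norm_inv] using
      (hinvd.continuousOn.continuous_ofReal_mul_exp hr.1.le hr.2).norm
  have key := tendsto_integral_of_tendsto_ae_of_integral_sq_le
    (μ := volume.restrict (Ioc 0 (2 * Real.pi))) (c := 1) (C := M)
    (hcont.mono fun r h => h.integrableOn_Ioc)
    (hcont.mono fun r h => (h.pow 2).integrableOn_Ioc)
    (Eventually.of_forall fun r => ae_of_all _ fun t => inv_nonneg.2 (norm_nonneg _))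
    (by
      filter_upwards [hr] with r hr
      simpa only [norm_inv, intervalIntegral.integral_of_le Real.two_pi_pos.le] using
        hM r hr.1.le hr.2)
    (ae_restrict_of_ae (hθ.2.2.mono fun t ht => by simpa using ht.inv₀ one_ne_zero))
  simpa [intervalIntegral.integral_of_le Real.two_pi_pos.le, Real.two_pi_pos.le] using key

lemma one_le_norm_apply_zero (hθ : InnerFunction θ) (hθ₀ : θ 0 ≠ 0)
    (hinv : MemHardy2 fun z => (θ z)⁻¹) : 1 ≤ ‖θ 0‖ := by
  have hmean : ∀ᶠ r : ℝ in 𝓝[<] 1, 2 * Real.pi * ‖θ 0‖⁻¹ ≤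
      ∫ t in (0 : ℝ)..2 * Real.pi, ‖θ (r * Complex.exp (t * I))‖⁻¹ := by
    filter_upwards [Ioo_mem_nhdsLT one_pos] with r hr
    simpa only [norm_inv] using hinv.1.two_pi_mul_norm_apply_zero_le hr.1.le hr.2
  have hle := ge_of_tendsto (hθ.tendsto_integral_inv_norm hinv) hmean
  rw [← inv_le_one₀ (norm_pos_iff.2 hθ₀)]
  nlinarith [Real.two_pi_pos]

lemma eq_unimodular_const_of_inv_memHardy2 (hθ : InnerFunction θ) (hθ₀ : θ 0 ≠ 0)
    (hinv : MemHardy2 fun z => (θ z)⁻¹) :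
    ∃ α : ℂ, ‖α‖ = 1 ∧ ∀ z ∈ ball (0 : ℂ) 1, θ z = α := by
  have h₀ : (0 : ℂ) ∈ ball (0 : ℂ) 1 := mem_ball_self one_pos
  have hθ0 := hθ.one_le_norm_apply_zero hθ₀ hinv
  refine ⟨θ 0, le_antisymm (hθ.2.1 0 h₀) hθ0, fun z hz => ?_⟩
  exact Complex.eqOn_of_isPreconnected_of_isMaxOn_norm (convex_ball 0 1).isPreconnected
    isOpen_ball hθ.1 h₀ (fun w hw => (hθ.2.1 w hw).trans hθ0) hz

end InnerFunction

/-- if `θH²` is invariant under every composition operator, then `θ` is a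
unimodular constant. -/
theorem beurling_invariant_under_all_implies_constant
    (θ : ℂ → ℂ) (hθ : InnerFunction θ)
    (h : ∀ φ : ℂ → ℂ, SelfMapD φ → BeurlingInv θ φ) :
    ∃ α : ℂ, ‖α‖ = 1 ∧ ∀ z ∈ Metric.ball (0:ℂ) 1, θ z = α := by
  obtain ⟨w, hw, hθw⟩ := hθ.exists_ne_zero
  obtain ⟨g, hg, hθg⟩ := h (fun _ => w) (selfMapD_const hw) _ (memHardy2_const 1)
  have hθg_eq : ∀ z ∈ ball (0 : ℂ) 1, θ z * g z = θ w := fun z hz => by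
    simpa using (hθg z hz).symm
  have hne : ∀ z ∈ ball (0 : ℂ) 1, θ z ≠ 0 := fun z hz hz₀ => hθw <| by
    rw [← hθg_eq z hz, hz₀, zero_mul]
  have hinv : MemHardy2 fun z => (θ z)⁻¹ := (hg.const_mul (θ w)⁻¹).congr fun z hz => by
    have hgz : g z ≠ 0 := right_ne_zero_of_mul (hθg_eq z hz ▸ hθw)
    rw [← hθg_eq z hz]
    field_simp [hne z hz]
  exact hθ.eq_unimodular_const_of_inv_memHardy2 (hne 0 (mem_ball_self one_pos)) hinv
end
end

section
/- Let φ be a holomorphic self-map of 𝔻 such that the model space Q_θ is invariant under C_φ for every inner function θ. Then φ is the identity map. -/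
/-!
For a Blaschke factor `b_α(z) = (α - z) / (1 - ᾱz)` the model space `Q_{b_α}` is the line
spanned by the Szegő kernel `k_α(z) = 1 / (1 - ᾱz)`. Indeed, by partial fractions `b_α k_w` is
a combination of `k_α` and `k_w`, and the reproducing property `⟨f, k_w⟩ = f(w)` turns
`f ⊥ b_α k_w` into `(1 - ᾱw) f(w) = (1 - |α|²) f(α)`, hence `(1 - ᾱw) f(w) = f(0)`.
Since `C_φ k_α ∈ Q_{b_α}`, this gives `1 - ᾱφ(w) = (1 - ᾱw)(1 - ᾱφ(0))`, so `φ` is affine;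
comparing `α = 1/2` with `α = 1/3` forces `φ(0) = 0` and then `φ(w) = w`.
-/

open Complex Metric Filter Set

noncomputable section

open Topology ComplexConjugate

lemma hcoef_congr {f g : ℂ → ℂ} (h : f =ᶠ[𝓝 0] g) : hcoef f = hcoef g := by
  ext n
  rw [hcoef, hcoef, h.iteratedDeriv_eq]

lemma hcoef_const_mul (c : ℂ) (f : ℂ → ℂ) (n : ℕ) :
    hcoef (fun z => c * f z) n = c * hcoef f n := by
  rw [hcoef, hcoef, iteratedDeriv_const_mul_field, mul_div_assoc]

lemma hcoef_add {f g : ℂ → ℂ} {n : ℕ} (hf : ContDiffAt ℂ n f 0)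
    (hg : ContDiffAt ℂ n g 0) :
    hcoef (fun z => f z + g z) n = hcoef f n + hcoef g n := by
  rw [hcoef, hcoef, hcoef, iteratedDeriv_fun_add hf hg, add_div]

lemma hasSum_hcoef_mul_pow {f : ℂ → ℂ} (hf : DifferentiableOn ℂ f (ball 0 1)) {w : ℂ}
    (hw : w ∈ ball (0 : ℂ) 1) : HasSum (fun n => hcoef f n * w ^ n) (f w) := by
  refine (Complex.hasSum_taylorSeries_on_ball hf hw).congr_fun fun n => ?_
  rw [hcoef, sub_zero, smul_eq_mul, smul_eq_mul]
  ring

def szegoKernel (α : ℂ) (z : ℂ) : ℂ := (1 - conj α * z)⁻¹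

lemma hcoef_szegoKernel (α : ℂ) (n : ℕ) : hcoef (szegoKernel α) n = conj α ^ n := by
  have h := congrFun (iter_deriv_inv_linear n (-conj α) 1) 0
  simp only [mul_zero, zero_add, one_zpow, mul_one] at h
  have hk : szegoKernel α = fun z => (-conj α * z + 1)⁻¹ := by
    ext z; rw [szegoKernel]; ring_nf
  have hsign : (-1 : ℂ) ^ n * (-conj α) ^ n = conj α ^ n := by
    rw [← mul_pow, neg_one_mul, neg_neg]
  rw [hcoef, hk, iteratedDeriv_eq_iterate, h, mul_right_comm, hsign,
    mul_div_cancel_right₀ _ (Nat.cast_ne_zero.mpr n.factorial_ne_zero)]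

lemma hInner_szegoKernel_left {f : ℂ → ℂ} (hf : DifferentiableOn ℂ f (ball 0 1))
    {α : ℂ} (hα : α ∈ ball (0 : ℂ) 1) : hInner (szegoKernel α) f = conj (f α) := by
  have h := (hasSum_hcoef_mul_pow hf hα).map (starRingEnd ℂ) Complex.continuous_conj
  rw [hInner, ← h.tsum_eq]
  congr 1 with n
  simp only [Function.comp_apply, hcoef_szegoKernel, map_mul, map_pow, mul_comm]

lemma norm_one_sub_mul_ge {c z : ℂ} (hz : ‖z‖ ≤ 1) : 1 - ‖c‖ ≤ ‖1 - c * z‖ :=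
  calc 1 - ‖c‖ ≤ 1 - ‖c * z‖ := by
        rw [norm_mul]; nlinarith [norm_nonneg c]
    _ ≤ ‖1 - c * z‖ := by simpa using norm_sub_norm_le (1 : ℂ) (c * z)

lemma one_sub_mul_ne_zero {c z : ℂ} (hc : ‖c‖ < 1) (hz : ‖z‖ ≤ 1) : 1 - c * z ≠ 0 :=
  norm_pos_iff.mp ((sub_pos.mpr hc).trans_le (norm_one_sub_mul_ge hz))

lemma one_sub_conj_mul_ne_zero {α z : ℂ} (hα : ‖α‖ < 1) (hz : ‖z‖ ≤ 1) :
    1 - conj α * z ≠ 0 :=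
  one_sub_mul_ne_zero (by rwa [Complex.norm_conj]) hz

lemma memHardy2_of_norm_le {f : ℂ → ℂ} {C : ℝ} (hf : DifferentiableOn ℂ f (ball 0 1))
    (hC : ∀ z ∈ ball (0 : ℂ) 1, ‖f z‖ ≤ C) : MemHardy2 f := by
  refine ⟨hf, C ^ 2 * |2 * Real.pi - 0|, fun r hr0 hr1 => ?_⟩
  refine (Real.le_norm_self _).trans (intervalIntegral.norm_integral_le_of_norm_le_const ?_)
  intro t _
  have hz : (r : ℂ) * Complex.exp (t * Complex.I) ∈ ball (0 : ℂ) 1 := by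
    rwa [mem_ball_zero_iff, norm_mul, Complex.norm_exp_ofReal_mul_I, mul_one,
      Complex.norm_real, Real.norm_of_nonneg hr0]
  rw [norm_pow, norm_norm]
  exact pow_le_pow_left₀ (norm_nonneg _) (hC _ hz) 2

lemma differentiableOn_szegoKernel {α : ℂ} (hα : ‖α‖ < 1) :
    DifferentiableOn ℂ (szegoKernel α) (ball 0 1) :=
  DifferentiableOn.inv (by fun_prop) fun z hz =>
    one_sub_conj_mul_ne_zero hα (mem_ball_zero_iff.mp hz).le

lemma memHardy2_szegoKernel {α : ℂ} (hα : ‖α‖ < 1) : MemHardy2 (szegoKernel α) := by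
  refine memHardy2_of_norm_le (C := (1 - ‖α‖)⁻¹) (differentiableOn_szegoKernel hα)
    fun z hz => ?_
  rw [szegoKernel, norm_inv]
  refine inv_anti₀ (sub_pos.mpr hα) ?_
  simpa only [Complex.norm_conj] using
    norm_one_sub_mul_ge (c := conj α) (mem_ball_zero_iff.mp hz).le

def blaschke (α z : ℂ) : ℂ := (α - z) / (1 - conj α * z)

lemma normSq_one_sub_conj_mul_sub_normSq_sub (α z : ℂ) :
    Complex.normSq (1 - conj α * z) - Complex.normSq (α - z)
      = (1 - Complex.normSq α) * (1 - Complex.normSq z) := by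
  simp only [Complex.normSq_apply, Complex.sub_re, Complex.sub_im, Complex.mul_re,
    Complex.mul_im, Complex.conj_re, Complex.conj_im, Complex.one_re, Complex.one_im]
  ring

lemma norm_sub_le_norm_one_sub_conj_mul {α z : ℂ} (hα : ‖α‖ ≤ 1) (hz : ‖z‖ ≤ 1) :
    ‖α - z‖ ≤ ‖1 - conj α * z‖ := by
  have h := normSq_one_sub_conj_mul_sub_normSq_sub α z
  rw [← Complex.sq_norm, ← Complex.sq_norm, ← Complex.sq_norm, ← Complex.sq_norm] at h
  have hα' : ‖α‖ ^ 2 ≤ 1 := pow_le_one₀ (norm_nonneg α) hα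
  have hz' : ‖z‖ ^ 2 ≤ 1 := pow_le_one₀ (norm_nonneg z) hz
  exact (pow_le_pow_iff_left₀ (norm_nonneg _) (norm_nonneg _) two_ne_zero).mp
    (by nlinarith)

lemma norm_sub_eq_norm_one_sub_conj_mul {α z : ℂ} (hz : ‖z‖ = 1) :
    ‖α - z‖ = ‖1 - conj α * z‖ := by
  have h := normSq_one_sub_conj_mul_sub_normSq_sub α z
  rw [← Complex.sq_norm z, hz, one_pow, sub_self, mul_zero, sub_eq_zero,
    ← Complex.sq_norm, ← Complex.sq_norm] at h
  exact ((sq_eq_sq₀ (norm_nonneg _) (norm_nonneg _)).mp h).symm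

lemma differentiableOn_blaschke {α : ℂ} (hα : ‖α‖ < 1) :
    DifferentiableOn ℂ (blaschke α) (ball 0 1) :=
  DifferentiableOn.div (by fun_prop) (by fun_prop) fun z hz =>
    one_sub_conj_mul_ne_zero hα (mem_ball_zero_iff.mp hz).le

lemma continuousAt_blaschke {α : ℂ} (hα : ‖α‖ < 1) {z : ℂ} (hz : ‖z‖ ≤ 1) :
    ContinuousAt (blaschke α) z :=
  ContinuousAt.div (by fun_prop) (by fun_prop) (one_sub_conj_mul_ne_zero hα hz)

lemma norm_blaschke_le_one {α : ℂ} (hα : ‖α‖ < 1) {z : ℂ} (hz : ‖z‖ ≤ 1) :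
    ‖blaschke α z‖ ≤ 1 := by
  rw [blaschke, norm_div, div_le_one (norm_pos_iff.mpr (one_sub_conj_mul_ne_zero hα hz))]
  exact norm_sub_le_norm_one_sub_conj_mul hα.le hz

lemma norm_blaschke_of_norm_eq_one {α : ℂ} (hα : ‖α‖ < 1) {z : ℂ} (hz : ‖z‖ = 1) :
    ‖blaschke α z‖ = 1 := by
  rw [blaschke, norm_div, norm_sub_eq_norm_one_sub_conj_mul hz,
    div_self (norm_ne_zero_iff.mpr (one_sub_conj_mul_ne_zero hα hz.le))]

lemma innerFunction_blaschke {α : ℂ} (hα : ‖α‖ < 1) : InnerFunction (blaschke α) := by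
  refine ⟨differentiableOn_blaschke hα,
    fun z hz => norm_blaschke_le_one hα (mem_ball_zero_iff.mp hz).le,
    Eventually.of_forall fun t => ?_⟩
  have hζ : ‖Complex.exp (t * Complex.I)‖ = 1 := Complex.norm_exp_ofReal_mul_I t
  have hray : ContinuousAt (fun r : ℝ => (r : ℂ) * Complex.exp (t * Complex.I)) 1 := by
    fun_prop
  have h := ((continuousAt_blaschke hα hζ.le).comp_of_eq hray (by simp)).norm.tendsto
  simp only [Function.comp_def, Complex.ofReal_one, one_mul,
    norm_blaschke_of_norm_eq_one hα hζ] at h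
  exact h.mono_left nhdsWithin_le_nhds

lemma szegoKernel_memModel_blaschke {α : ℂ} (hα : ‖α‖ < 1) :
    MemModel (blaschke α) (szegoKernel α) := by
  refine ⟨memHardy2_szegoKernel hα, fun g hg => ?_⟩
  have hval := hInner_szegoKernel_left (f := fun z => blaschke α z * g z)
    ((differentiableOn_blaschke hα).mul hg.1) (mem_ball_zero_iff.mpr hα)
  simpa [blaschke] using hval

lemma blaschke_mul_szegoKernel {α w z B : ℂ} (hB : B * (conj α - conj w) = 1 - α * conj w)
    (hαz : 1 - conj α * z ≠ 0) (hwz : 1 - conj w * z ≠ 0) :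
    blaschke α z * szegoKernel w z = (α - B) * szegoKernel α z + B * szegoKernel w z := by
  rw [blaschke, szegoKernel, szegoKernel, ← div_eq_mul_inv, ← div_eq_mul_inv,
    ← div_eq_mul_inv, div_add_div _ _ hαz hwz, div_div, div_left_inj' (mul_ne_zero hαz hwz)]
  linear_combination z * hB

lemma hcoef_blaschke_mul_szegoKernel {α w B : ℂ} (hα : ‖α‖ < 1) (hw : ‖w‖ < 1)
    (hB : B * (conj α - conj w) = 1 - α * conj w) (n : ℕ) :
    hcoef (fun z => blaschke α z * szegoKernel w z) n
      = (α - B) * conj α ^ n + B * conj w ^ n := by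
  have h0 : ball (0 : ℂ) 1 ∈ 𝓝 0 := isOpen_ball.mem_nhds (mem_ball_self one_pos)
  have hsplit : (fun z => blaschke α z * szegoKernel w z)
      =ᶠ[𝓝 0] fun z => (α - B) * szegoKernel α z + B * szegoKernel w z := by
    filter_upwards [h0] with z hz
    have hz' := (mem_ball_zero_iff.mp hz).le
    exact blaschke_mul_szegoKernel hB (one_sub_conj_mul_ne_zero hα hz')
      (one_sub_conj_mul_ne_zero hw hz')
  have hsmooth {β : ℂ} (hβ : ‖β‖ < 1) (c : ℂ) :
      ContDiffAt ℂ n (fun z => c * szegoKernel β z) 0 :=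
    contDiffAt_const.mul (((differentiableOn_szegoKernel hβ).contDiffOn isOpen_ball).contDiffAt h0)
  rw [hcoef_congr hsplit, hcoef_add (hsmooth hα _) (hsmooth hw _), hcoef_const_mul,
    hcoef_const_mul, hcoef_szegoKernel, hcoef_szegoKernel]

lemma MemModel.one_sub_conj_mul_mul_eq {f : ℂ → ℂ} {α : ℂ} (hα : ‖α‖ < 1)
    (hf : MemModel (blaschke α) f) {w : ℂ} (hw : w ∈ ball (0 : ℂ) 1) :
    (1 - conj α * w) * f w = (1 - conj α * α) * f α := by
  by_cases hwα : w = α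
  · rw [hwα]
  have hw' : ‖w‖ < 1 := mem_ball_zero_iff.mp hw
  have hconj : conj α - conj w ≠ 0 :=
    sub_ne_zero.mpr fun h => hwα ((starRingEnd ℂ).injective h).symm
  set B := (1 - α * conj w) / (conj α - conj w)
  have hB : B * (conj α - conj w) = 1 - α * conj w := div_mul_cancel₀ _ hconj
  have hsum : HasSum
      (fun n => hcoef f n * conj (hcoef (fun z => blaschke α z * szegoKernel w z) n))
      (conj (α - B) * f α + conj B * f w) := by
    refine (((hasSum_hcoef_mul_pow hf.1.1 (mem_ball_zero_iff.mpr hα)).mul_left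
      (conj (α - B))).add ((hasSum_hcoef_mul_pow hf.1.1 hw).mul_left (conj B))).congr_fun
      fun n => ?_
    rw [hcoef_blaschke_mul_szegoKernel hα hw' hB]
    simp only [map_add, map_mul, map_pow, Complex.conj_conj]
    ring
  have horth : conj (α - B) * f α + conj B * f w = 0 := by
    rw [← hsum.tsum_eq, ← hf.2 _ (memHardy2_szegoKernel hw'), hInner]
  have hB' := congrArg conj hB
  simp only [map_mul, map_sub, map_one, Complex.conj_conj] at hB' horth
  linear_combination (α - w) * horth + (f α - f w) * hB'

lemma MemModel.one_sub_conj_mul_mul_eq_apply_zero {f : ℂ → ℂ} {α : ℂ} (hα : ‖α‖ < 1)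
    (hf : MemModel (blaschke α) f) {w : ℂ} (hw : w ∈ ball (0 : ℂ) 1) :
    (1 - conj α * w) * f w = f 0 := by
  have h0 := hf.one_sub_conj_mul_mul_eq hα (mem_ball_self one_pos)
  rw [mul_zero, sub_zero, one_mul] at h0
  rw [hf.one_sub_conj_mul_mul_eq hα hw, h0]

lemma ModelInv.one_sub_conj_mul_eq {φ : ℂ → ℂ} {α : ℂ} (hα : ‖α‖ < 1)
    (hφ : MapsTo φ (ball 0 1) (ball 0 1)) (h : ModelInv (blaschke α) φ)
    {w : ℂ} (hw : w ∈ ball (0 : ℂ) 1) :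
    1 - conj α * φ w = (1 - conj α * w) * (1 - conj α * φ 0) := by
  have hk := (h _ (szegoKernel_memModel_blaschke hα)).one_sub_conj_mul_mul_eq_apply_zero hα hw
  have hne {z : ℂ} (hz : z ∈ ball (0 : ℂ) 1) : 1 - conj α * φ z ≠ 0 :=
    one_sub_conj_mul_ne_zero hα (mem_ball_zero_iff.mp (hφ hz)).le
  rw [szegoKernel, szegoKernel, ← div_eq_mul_inv, div_eq_iff (hne hw),
    eq_inv_mul_iff_mul_eq₀ (hne (mem_ball_self one_pos))] at hk
  linear_combination -hk

/-- if `Q_θ` is `C_φ`-invariant for every inner `θ`, then `φ` is the identity. -/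
theorem all_model_invariant_implies_identity
    (φ : ℂ → ℂ) (hφ : SelfMapD φ)
    (h : ∀ θ : ℂ → ℂ, InnerFunction θ → ModelInv θ φ) :
    ∀ z ∈ Metric.ball (0:ℂ) 1, φ z = z := by
  have key (α : ℂ) (hα : ‖α‖ < 1) (w : ℂ) (hw : w ∈ ball (0 : ℂ) 1) :=
    (h _ (innerFunction_blaschke hα)).one_sub_conj_mul_eq hα hφ.2 hw
  have half : (1 / 2 : ℂ) ∈ ball (0 : ℂ) 1 := by norm_num
  have e2 := key (1 / 2) (by norm_num)
  have e3 := key (1 / 3) (by norm_num)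
  simp only [map_div₀, map_one, map_ofNat] at e2 e3
  -- eliminating `φ w` between the two identities leaves `w * φ 0 / 6 = 0`
  have hφ0 : φ 0 = 0 := by
    linear_combination (-24 : ℂ) * e2 _ half + 36 * e3 _ half
  intro z hz
  linear_combination (-2 : ℂ) * e2 z hz + (1 - z / 2) * hφ0
end
end
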